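/- Let 𝒜 be an associative supercommutative superalgebra over a field 𝕂 of characteristic zero and δ an even derivation of 𝒜. Then the bracket [u,v]_δ = u·δ(v) − (−1)^{|u||v|} v·δ(u) satisfies the transposed Poisson compatibility condition: for all homogeneous u, v, w ∈ 𝒜, 2 w·[u,v]_δ = [w·u, v]_δ + (−1)^{|u||w|} [u, w·v]_δ. -/
import Mathlib


/-- The sign `(-1)^{ij}` in a field `K`, for parities `i j : ZMod 2`. -/
def sg (K : Type*) [Field K] (i j : ZMod 2) : K := (-1) ^ (i.val * j.val)

/-- The bracket `[u,v]_δ = u·δ(v) − s·(v·δ(u))`, where `s` is the relevant sign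
`(-1)^{|u||v|}`. -/
def tpb {K A : Type*} [Field K] [Ring A] [Algebra K A]
    (δ : A → A) (s : K) (u v : A) : A :=
  u * δ v - s • (v * δ u)

lemma sg_comm {K : Type*} [Field K] (i j : ZMod 2) : sg K i j = sg K j i := by
  unfold sg; rw [Nat.mul_comm]
lemma sg_sq {K : Type*} [Field K] (i j : ZMod 2) : sg K i j * sg K i j = 1 := by
  unfold sg; rw [← pow_add, ← two_mul, pow_mul]; norm_num
lemma sg_add_left {K : Type*} [Field K] (i j k : ZMod 2) :
    sg K (i + j) k = sg K i k * sg K j k := by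
  unfold sg
  rw [← pow_add, neg_one_pow_eq_pow_mod_two, neg_one_pow_eq_pow_mod_two
    (n := i.val * k.val + j.val * k.val), ZMod.val_add]
  congr 1
  conv_rhs => rw [← add_mul]
  simp [Nat.mul_mod]
lemma sg_add_right {K : Type*} [Field K] (i j k : ZMod 2) :
    sg K i (j + k) = sg K i j * sg K i k := by
  rw [sg_comm, sg_add_left, sg_comm j i, sg_comm k i]

/-- for an associative supercommutative superalgebra `A` over a field `K`
of characteristic zero, with grading `𝒜 : ZMod 2 → Submodule K A`, and an even
derivation `δ`, the bracket `[u,v]_δ = u·δ(v) − (−1)^{|u||v|} v·δ(u)` satisfies the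
transposed Poisson compatibility condition
`2 w·[u,v]_δ = [w·u,v]_δ + (−1)^{|u||w|}[u,w·v]_δ`
for homogeneous `u, v, w` of parities `i, j, k` respectively. -/
theorem bracket_transposed_poisson_compatibility
    {K A : Type*} [Field K] [CharZero K] [Ring A] [Algebra K A]
    (𝒜 : ZMod 2 → Submodule K A) [GradedAlgebra 𝒜]
    (hcomm : ∀ (i j : ZMod 2) (u v : A), u ∈ 𝒜 i → v ∈ 𝒜 j →
      u * v = sg K i j • (v * u))
    (δ : A →ₗ[K] A)
    (hδeven : ∀ (i : ZMod 2) (u : A), u ∈ 𝒜 i → δ u ∈ 𝒜 i)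
    (hδder : ∀ u v : A, δ (u * v) = δ u * v + u * δ v)
    (i j k : ZMod 2) (u v w : A) (hu : u ∈ 𝒜 i) (hv : v ∈ 𝒜 j) (hw : w ∈ 𝒜 k) :
    (2 : K) • (w * tpb δ (sg K i j) u v) =
      tpb δ (sg K (k + i) j) (w * u) v +
        sg K i k • tpb δ (sg K i (k + j)) u (w * v) := by
  have hδu := hδeven i u hu
  have hδv := hδeven j v hv
  have hδw := hδeven k w hw
  have h1 : v * (δ w * u) = (sg K i j * sg K i k) • (u * (v * δ w)) := by
    rw [hcomm j (k + i) v (δ w * u) hv (SetLike.mul_mem_graded hδw hu), mul_assoc,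
      hcomm k (i + j) (δ w) (u * v) hδw (SetLike.mul_mem_graded hu hv),
      smul_smul, mul_assoc]
    congr 1
    rw [sg_add_right, sg_add_right, sg_comm j i, sg_comm k i, sg_comm k j]
    linear_combination sg K i j * sg K i k * sg_sq (K := K) j k
  have h2 : v * (w * δ u) = sg K j k • (w * (v * δ u)) := by
    rw [hcomm j (k + i) v (w * δ u) hv (SetLike.mul_mem_graded hw hδu), mul_assoc,
      hcomm i j (δ u) v hδu hv, mul_smul_comm, smul_smul]
    congr 1
    rw [sg_add_right, sg_comm j i]
    linear_combination sg K j k * sg_sq (K := K) i j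
  have h3 : u * (δ w * v) = sg K k j • (u * (v * δ w)) := by
    rw [hcomm k j (δ w) v hδw hv, mul_smul_comm]
  have h4 : u * (w * δ v) = sg K i k • (w * (u * δ v)) := by
    rw [hcomm i (k + j) u (w * δ v) hu (SetLike.mul_mem_graded hw hδv), mul_assoc,
      hcomm j i (δ v) u hδv hu, mul_smul_comm, smul_smul]
    congr 1
    rw [sg_add_right, sg_comm j i]
    linear_combination sg K i k * sg_sq (K := K) i j
  simp only [tpb, hδder, mul_add, mul_sub, smul_sub, smul_add, smul_smul,
    mul_smul_comm, mul_assoc]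
  rw [h1, h2, h3, h4]
  match_scalars <;> (try simp only [sg_add_left, sg_add_right, sg_comm j i, sg_comm k i, sg_comm k j])
  · linear_combination (-1 : K) * sg_sq (K := K) i k
  · linear_combination sg K i j * sg_sq (K := K) j k + sg K i j * sg_sq (K := K) i k
  · linear_combination sg K i k * sg K j k * sg_sq (K := K) i j
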